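/- (ISS Lyapunov theorem with respect to two outputs, exponential case; Theorem 2 of the paper.) Let Ξ ⊆ ℝ^{n_ξ} be closed, let Ω_c assign to each ξ ∈ Ξ a set Ω_c(ξ) ⊆ ℝ^{n_ω} with 0 ∈ Ω_c(ξ), and let F_c : Ξ × ℝ^{n_ω} → ℝ^{n_ξ} satisfy F_c(ξ,ω) ∈ Ξ whenever ξ ∈ Ξ and ω ∈ Ω_c(ξ). Let G1 : Ξ → ℝ^{n_1}, G2 : Ξ → ℝ^{n_2}, and let X ⊆ Ξ be closed and robustly positive invariant, i.e., ξ ∈ X and ω ∈ Ω_c(ξ) imply F_c(ξ,ω) ∈ X. Suppose there exist V : Ξ → [0,∞), constants a1, a2, a3, b > 0, and σ of class 𝒦 such that for all ξ ∈ X and ω ∈ Ω_c(ξ): a1‖G1(ξ)‖^b ≤ V(ξ) ≤ a2‖G2(ξ)‖^b and V(F_c(ξ,ω)) ≤ V(ξ) − a3·V(ξ) + σ(‖ω‖). Then there exist c > 0, λ ∈ (0,1), and γ of class 𝒦 such that every trajectory with ξ(k+1) = F_c(ξ(k), ω(k)), ω(k) ∈ Ω_c(ξ(k)) for all k, and ξ(0)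 ∈ X satisfies ‖G1(ξ(k))‖ ≤ c λ^k ‖G2(ξ(0))‖ + γ(max_{0≤i≤k} ‖ω(i)‖) for all k ∈ ℕ. -/

import Mathlib

open scoped BigOperators

noncomputable section

abbrev Vec (n : ℕ) : Type := EuclideanSpace ℝ (Fin n)

/-- Class 𝒦 functions `[0,∞) → [0,∞)`. -/
def IsClassK (φ : ℝ → ℝ) : Prop :=
  ContinuousOn φ (Set.Ici 0) ∧ StrictMonoOn φ (Set.Ici 0) ∧ φ 0 = 0 ∧ ∀ t, 0 ≤ t → 0 ≤ φ t

/-!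
Along a trajectory the decrease condition makes `V` contract by a factor `r < 1` per step up to
the additive disturbance `σ(‖ω‖)`, so by the discrete Grönwall estimate
`V(ξ k) ≤ r ^ k V(ξ 0) + σ(max ‖ω‖) / (1 - r)`. Sandwiching `V` between `a1 ‖G1‖ ^ b` and
`a2 ‖G2‖ ^ b` and taking `b`-th roots, with `(x + y) ^ p ≤ 2 ^ p (x ^ p + y ^ p)` to split the
root of the sum, gives the estimate with rate `r ^ (1 / b)`.
-/

namespace Real

lemma add_rpow_le_two_rpow_mul_rpow_add_rpow {x y p : ℝ} (hx : 0 ≤ x) (hy : 0 ≤ y)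
    (hp : 0 ≤ p) : (x + y) ^ p ≤ 2 ^ p * (x ^ p + y ^ p) := calc
  (x + y) ^ p ≤ (2 * max x y) ^ p := by
    rw [two_mul]; gcongr <;> simp
  _ = 2 ^ p * max x y ^ p := mul_rpow zero_le_two (le_max_of_le_left hx)
  _ = 2 ^ p * max (x ^ p) (y ^ p) := by rw [rpow_max hx hy hp]
  _ ≤ 2 ^ p * (x ^ p + y ^ p) := by
    gcongr; exact max_le_add_of_nonneg (rpow_nonneg hx p) (rpow_nonneg hy p)

lemma le_of_mul_rpow_le_mul_mul_rpow_add {x y μ s a c b : ℝ} (hx : 0 ≤ x) (hy : 0 ≤ y)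
    (hμ : 0 ≤ μ) (hs : 0 ≤ s) (ha : 0 < a) (hc : 0 < c) (hb : 0 < b)
    (h : a * x ^ b ≤ μ * (c * y ^ b) + s) :
    x ≤ 2 ^ b⁻¹ * (c / a) ^ b⁻¹ * μ ^ b⁻¹ * y + 2 ^ b⁻¹ * (s / a) ^ b⁻¹ := calc
  x = (x ^ b) ^ b⁻¹ := (rpow_rpow_inv hx hb.ne').symm
  _ ≤ (μ * (c / a) * y ^ b + s / a) ^ b⁻¹ := by
    gcongr
    rw [show μ * (c / a) * y ^ b + s / a = (μ * (c * y ^ b) + s) / a by ring, le_div_iff₀ ha,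
      mul_comm]
    exact h
  _ ≤ 2 ^ b⁻¹ * ((μ * (c / a) * y ^ b) ^ b⁻¹ + (s / a) ^ b⁻¹) :=
    add_rpow_le_two_rpow_mul_rpow_add_rpow (by positivity) (by positivity) (by positivity)
  _ = 2 ^ b⁻¹ * (c / a) ^ b⁻¹ * μ ^ b⁻¹ * y + 2 ^ b⁻¹ * (s / a) ^ b⁻¹ := by
    rw [mul_rpow (by positivity) (by positivity), mul_rpow hμ (by positivity),
      rpow_rpow_inv hy hb.ne']
    ring

end Real

lemma mem_of_isInvariant_of_mem_zero {α β : Type*} {X : Set α} {Ω : α → Set β}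
    {F : α → β → α} (hX : ∀ x ∈ X, ∀ w ∈ Ω x, F x w ∈ X) {ξ : ℕ → α} {ω : ℕ → β}
    (hstep : ∀ k, ξ (k + 1) = F (ξ k) (ω k)) (hω : ∀ k, ω k ∈ Ω (ξ k)) (h0 : ξ 0 ∈ X) :
    ∀ k, ξ k ∈ X
  | 0 => h0
  | k + 1 => hstep k ▸ hX _ (mem_of_isInvariant_of_mem_zero hX hstep hω h0 k) _ (hω k)

lemma le_pow_mul_add_div_of_le_mul_add {v : ℕ → ℝ} {r s : ℝ} (hr0 : 0 ≤ r) (hr1 : r < 1)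
    (hs : 0 ≤ s) {k : ℕ} (hstep : ∀ j < k, v (j + 1) ≤ r * v j + s) :
    v k ≤ r ^ k * v 0 + s / (1 - r) := by
  induction k with
  | zero =>
    have : 0 ≤ s / (1 - r) := div_nonneg hs (by linarith)
    simpa using this
  | succ k ih =>
    have hvk := ih fun j hj => hstep j (by omega)
    have hfix : r * (s / (1 - r)) + s = s / (1 - r) := by
      field_simp [(by linarith : (1 - r) ≠ 0)]
      ring
    calc v (k + 1) ≤ r * v k + s := hstep k (by omega)
      _ ≤ r * (r ^ k * v 0 + s / (1 - r)) + s := by gcongr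
      _ = r ^ (k + 1) * v 0 + s / (1 - r) := by rw [pow_succ]; linear_combination hfix

namespace IsClassK

variable {σ : ℝ → ℝ}

lemma monotoneOn (hσ : IsClassK σ) : MonotoneOn σ (Set.Ici 0) :=
  hσ.2.1.monotoneOn

lemma const_mul (hσ : IsClassK σ) {c : ℝ} (hc : 0 < c) : IsClassK fun t => c * σ t :=
  ⟨continuousOn_const.mul hσ.1, fun _ hx _ hy hxy => mul_lt_mul_of_pos_left (hσ.2.1 hx hy hxy) hc,
    by simp [hσ.2.2.1], fun t ht => mul_nonneg hc.le (hσ.2.2.2 t ht)⟩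

lemma div_const (hσ : IsClassK σ) {c : ℝ} (hc : 0 < c) : IsClassK fun t => σ t / c := by
  simpa only [div_eq_inv_mul] using hσ.const_mul (inv_pos.2 hc)

lemma rpow (hσ : IsClassK σ) {p : ℝ} (hp : 0 < p) : IsClassK fun t => σ t ^ p :=
  ⟨hσ.1.rpow_const fun _ _ => Or.inr hp.le,
    fun _ hx _ hy hxy => Real.rpow_lt_rpow (hσ.2.2.2 _ hx) (hσ.2.1 hx hy hxy) hp,
    by simp [hσ.2.2.1, Real.zero_rpow hp.ne'], fun t ht => Real.rpow_nonneg (hσ.2.2.2 t ht) p⟩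

end IsClassK

theorem iss_lyapunov_two_outputs_exponential_general
    {nξ nω n1 n2 : ℕ}
    (Ξ : Set (Vec nξ))
    (Ωc : Vec nξ → Set (Vec nω))
    (Fc : Vec nξ → Vec nω → Vec nξ)
    (G1 : Vec nξ → Vec n1) (G2 : Vec nξ → Vec n2)
    (X : Set (Vec nξ)) (hXΞ : X ⊆ Ξ)
    (hXinv : ∀ ξ ∈ X, ∀ ω ∈ Ωc ξ, Fc ξ ω ∈ X)
    (V : Vec nξ → ℝ) (hVnn : ∀ ξ ∈ Ξ, 0 ≤ V ξ)
    (a1 a2 a3 b : ℝ) (ha1 : 0 < a1) (ha2 : 0 < a2) (ha3 : 0 < a3) (hb : 0 < b)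
    (σ : ℝ → ℝ) (hσ : IsClassK σ)
    (hlow : ∀ ξ ∈ X, a1 * ‖G1 ξ‖ ^ b ≤ V ξ)
    (hup : ∀ ξ ∈ X, V ξ ≤ a2 * ‖G2 ξ‖ ^ b)
    (hdec : ∀ ξ ∈ X, ∀ ω ∈ Ωc ξ, V (Fc ξ ω) ≤ V ξ - a3 * V ξ + σ ‖ω‖) :
    ∃ (c lam : ℝ) (γ : ℝ → ℝ), 0 < c ∧ lam ∈ Set.Ioo (0 : ℝ) 1 ∧ IsClassK γ ∧
      ∀ (ξ : ℕ → Vec nξ) (ω : ℕ → Vec nω),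
        (∀ k, ξ (k + 1) = Fc (ξ k) (ω k)) → (∀ k, ω k ∈ Ωc (ξ k)) → ξ 0 ∈ X →
        ∀ k : ℕ, ‖G1 (ξ k)‖ ≤ c * lam ^ k * ‖G2 (ξ 0)‖ +
          γ ((Finset.range (k + 1)).sup' Finset.nonempty_range_add_one fun i => ‖ω i‖) := by
  -- `1 - a3` may be nonpositive, and the rate has to lie in `(0, 1)`.
  set r : ℝ := max (1 - a3) (1 / 2)
  have hr0 : 0 < r := lt_max_of_lt_right (by norm_num)
  have hr1 : r < 1 := max_lt (by linarith) (by norm_num)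
  set p : ℝ := b⁻¹
  have hp : 0 < p := inv_pos.2 hb
  refine ⟨2 ^ p * (a2 / a1) ^ p, r ^ p, fun t => 2 ^ p * (σ t / (1 - r) / a1) ^ p,
    by positivity, ⟨by positivity, Real.rpow_lt_one hr0.le hr1 hp⟩,
    ((hσ.div_const (by linarith)).div_const ha1).rpow hp |>.const_mul (by positivity), ?_⟩
  intro ξ ω hstep hω hξ0 k
  set M := (Finset.range (k + 1)).sup' Finset.nonempty_range_add_one fun i => ‖ω i‖
  have hωM : ∀ j ≤ k, ‖ω j‖ ≤ M := fun j hj =>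
    Finset.le_sup' (fun i => ‖ω i‖) (Finset.mem_range.2 (Nat.lt_succ_of_le hj))
  have hM0 : 0 ≤ M := (norm_nonneg _).trans (hωM 0 k.zero_le)
  have hξX := mem_of_isInvariant_of_mem_zero hXinv hstep hω hξ0
  have hVstep : ∀ j < k, V (ξ (j + 1)) ≤ r * V (ξ j) + σ M := by
    intro j hj
    have hVj := hVnn _ (hXΞ (hξX j))
    have hσj := hσ.monotoneOn (norm_nonneg (ω j)) hM0 (hωM j hj.le)
    have := hdec _ (hξX j) _ (hω j)
    rw [hstep j]
    nlinarith [le_max_left (1 - a3) (1 / 2)]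
  have hVk := le_pow_mul_add_div_of_le_mul_add (v := fun j => V (ξ j)) hr0.le hr1
    (hσ.2.2.2 M hM0) hVstep
  have hsandwich : a1 * ‖G1 (ξ k)‖ ^ b ≤ r ^ k * (a2 * ‖G2 (ξ 0)‖ ^ b) + σ M / (1 - r) := by
    nlinarith [hlow _ (hξX k), hup _ hξ0, pow_nonneg hr0.le k]
  have hG1 := Real.le_of_mul_rpow_le_mul_mul_rpow_add (norm_nonneg _) (norm_nonneg _)
    (pow_nonneg hr0.le k) (div_nonneg (hσ.2.2.2 M hM0) (by linarith)) ha1 ha2 hb hsandwich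
  rw [← Real.rpow_pow_comm hr0.le] at hG1
  exact hG1.trans_eq (by ring)

/-- **ISS Lyapunov theorem with respect to two outputs, exponential case (Theorem 2).** -/
theorem iss_lyapunov_two_outputs_exponential
    {nξ nω n1 n2 : ℕ}
    (Ξ : Set (Vec nξ)) (hΞ : IsClosed Ξ)
    (Ωc : Vec nξ → Set (Vec nω)) (hΩ0 : ∀ ξ ∈ Ξ, (0 : Vec nω) ∈ Ωc ξ)
    (Fc : Vec nξ → Vec nω → Vec nξ)
    (hFΞ : ∀ ξ ∈ Ξ, ∀ ω ∈ Ωc ξ, Fc ξ ω ∈ Ξ)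
    (G1 : Vec nξ → Vec n1) (G2 : Vec nξ → Vec n2)
    (X : Set (Vec nξ)) (hXcl : IsClosed X) (hXΞ : X ⊆ Ξ)
    (hXinv : ∀ ξ ∈ X, ∀ ω ∈ Ωc ξ, Fc ξ ω ∈ X)
    (V : Vec nξ → ℝ) (hVnn : ∀ ξ ∈ Ξ, 0 ≤ V ξ)
    (a1 a2 a3 b : ℝ) (ha1 : 0 < a1) (ha2 : 0 < a2) (ha3 : 0 < a3) (hb : 0 < b)
    (σ : ℝ → ℝ) (hσ : IsClassK σ)
    (hlow : ∀ ξ ∈ X, a1 * ‖G1 ξ‖ ^ b ≤ V ξ)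
    (hup : ∀ ξ ∈ X, V ξ ≤ a2 * ‖G2 ξ‖ ^ b)
    (hdec : ∀ ξ ∈ X, ∀ ω ∈ Ωc ξ, V (Fc ξ ω) ≤ V ξ - a3 * V ξ + σ ‖ω‖) :
    ∃ (c lam : ℝ) (γ : ℝ → ℝ), 0 < c ∧ lam ∈ Set.Ioo (0 : ℝ) 1 ∧ IsClassK γ ∧
      ∀ (ξ : ℕ → Vec nξ) (ω : ℕ → Vec nω),
        (∀ k, ξ (k + 1) = Fc (ξ k) (ω k)) → (∀ k, ω k ∈ Ωc (ξ k)) → ξ 0 ∈ X →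
        ∀ k : ℕ, ‖G1 (ξ k)‖ ≤ c * lam ^ k * ‖G2 (ξ 0)‖ +
          γ ((Finset.range (k + 1)).sup' Finset.nonempty_range_add_one fun i => ‖ω i‖) :=
  iss_lyapunov_two_outputs_exponential_general Ξ Ωc Fc G1 G2 X hXΞ hXinv V hVnn a1 a2 a3 b ha1 ha2
    ha3 hb σ hσ hlow hup hdec
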